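/- Let H be a k-uniform k-partite hypergraph with vertex partition V_1, …, V_k, and suppose there exists an index i such that every vertex of V_i lies in exactly two edges of H. Then the Graver basis of I_H generates the ideal I_H, and every element of the Graver basis is an indispensable binomial of I_H; consequently the Graver basis is the unique minimal binomial generating set of I_H. -/

import Mathlib

open MvPolynomial

namespace ToricHG

variable (K : Type) [Field K] (V : Type) [Fintype V] [DecidableEq V]

/-- The edges of a hypergraph with edge set `E`, as a type. -/
abbrev Edge (E : Finset (Finset V)) : Type := {e : Finset V // e ∈ E}

/-- The monomial map `t_e ↦ ∏_{v ∈ e} x_v`. -/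
noncomputable def phiH (E : Finset (Finset V)) :
    MvPolynomial (Edge V E) K →ₐ[K] MvPolynomial V K :=
  aeval (fun e : Edge V E => ∏ v ∈ e.1, (X v : MvPolynomial V K))

/-- The toric ideal of a hypergraph. -/
noncomputable def toricIdeal (E : Finset (Finset V)) :
    Ideal (MvPolynomial (Edge V E) K) :=
  RingHom.ker (phiH K V E).toRingHom

/-- The number of edges of the multiset `M` containing `v`, counted with multiplicity. -/
def degIn (E : Finset (Finset V)) (v : V) (M : Multiset (Edge V E)) : ℕ :=
  Multiset.card (M.filter (fun e => v ∈ e.1))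

/-- The bicolored edge multiset `(B, R)` is balanced. -/
def Balanced (E : Finset (Finset V)) (B R : Multiset (Edge V E)) : Prop :=
  ∀ v : V, degIn V E v B = degIn V E v R

/-- The binomial arising from the bicolored edge multiset `(B, R)`. -/
noncomputable def binom (E : Finset (Finset V)) (B R : Multiset (Edge V E)) :
    MvPolynomial (Edge V E) K :=
  (B.map fun e => (X e : MvPolynomial (Edge V E) K)).prod -
    (R.map fun e => (X e : MvPolynomial (Edge V E) K)).prod

/-- The balanced edge set `(B, R)` is primitive. -/
def Primitive (E : Finset (Finset V)) (B R : Multiset (Edge V E)) : Prop :=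
  Balanced V E B R ∧
    ¬ ∃ B' R' : Multiset (Edge V E),
        ¬(B' = 0 ∧ R' = 0) ∧ Balanced V E B' R' ∧ B' < B ∧ R' < R

/-- The balanced edge set `(Fb, Fr)` is reducible with separator `S` and
decomposition `((G1b, G1r), S, (G2b, G2r))`. -/
def ReducibleWith (E : Finset (Finset V))
    (Fb Fr S G1b G1r G2b G2r : Multiset (Edge V E)) : Prop :=
  Balanced V E Fb Fr ∧ S ≠ 0 ∧ S.toFinset ⊆ (Fb + Fr).toFinset ∧
    Balanced V E G1b G1r ∧ Balanced V E G2b G2r ∧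
    ¬(G1b = Fb ∧ G1r = Fr) ∧ ¬(G2b = Fb ∧ G2r = Fr) ∧
    S = G1r ∩ G2b ∧ Fb = G1b + G2b ∧ Fr = G1r + G2r

/-- `S` is a splitting set of the balanced edge set `(Eb, Er)` with
decomposition `((G1b, G1r), S, (G2b, G2r))`, i.e. `(Eb, Er) + S` is reducible with
separator `S` and this decomposition. -/
def SplittingSetWith (E : Finset (Finset V))
    (Eb Er S G1b G1r G2b G2r : Multiset (Edge V E)) : Prop :=
  ReducibleWith V E (Eb + S) (Er + S) S G1b G1r G2b G2r

/-- `S` is a proper splitting set of the balanced edge set `(Eb, Er)`. -/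
def ProperSplittingSet (E : Finset (Finset V))
    (Eb Er S : Multiset (Edge V E)) : Prop :=
  ∃ G1b G1r G2b G2r : Multiset (Edge V E),
    SplittingSetWith V E Eb Er S G1b G1r G2b G2r ∧ S < G1r ∧ S < G2b

/-- A binomial: the difference of two distinct monic monomials. -/
def IsBinomial (E : Finset (Finset V)) (f : MvPolynomial (Edge V E) K) : Prop :=
  ∃ a b : (Edge V E) →₀ ℕ, a ≠ b ∧ f = monomial a 1 - monomial b 1

/-- `f` is an indispensable binomial of the toric ideal of the hypergraph. -/
def Indispensable (E : Finset (Finset V)) (f : MvPolynomial (Edge V E) K) : Prop :=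
  ∀ G : Set (MvPolynomial (Edge V E) K),
    (∀ g ∈ G, IsBinomial K V E g) → Ideal.span G = toricIdeal K V E →
      f ∈ G ∨ -f ∈ G

/-- The Graver basis of the toric ideal of the hypergraph: the binomials arising from
primitive balanced edge sets `(B, R)` with `B ≠ R`. -/
def GraverSet (E : Finset (Finset V)) : Set (MvPolynomial (Edge V E) K) :=
  {f | ∃ B R : Multiset (Edge V E), Primitive V E B R ∧ B ≠ R ∧ f = binom K V E B R}

/-- The ideal `I` is generated in degree at most `d`. -/
def GenInDegLE {σ : Type} (I : Ideal (MvPolynomial σ K)) (d : ℕ) : Prop :=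
  I = Ideal.span {f | f ∈ I ∧ f.totalDegree ≤ d}

end ToricHG

/-!
The Graver basis generates every toric ideal: the kernel of a monomial map is spanned by the
binomials of balanced pairs, and a non-primitive balanced binomial is a combination of two
smaller balanced binomials.

For indispensability, every edge `e` meets the `2`-regular part in a vertex `x` lying on exactly
one further edge `e'`, so balancedness at `x` fixes the total multiplicity of `e` and `e'`.
Together with primitivity this forces the fibre of `t^B`, for a primitive `(B, R)` with `B ≠ R`,
to be `{t^B, t^R}`. A binomial generating set must move `t^B` somewhere inside its fibre, and
the only such move is `±(t^B - t^R)`.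
-/

namespace MvPolynomial

variable {σ τ R : Type*} [CommRing R]

theorem prod_map_X_eq_monomial [DecidableEq σ] (M : Multiset σ) :
    (M.map X).prod = (monomial (Multiset.toFinsupp M) 1 : MvPolynomial σ R) := by
  induction M using Multiset.induction_on with
  | empty => simp
  | cons i M ih =>
    rw [Multiset.map_cons, Multiset.prod_cons, ih, X, monomial_mul, one_mul,
      ← Multiset.singleton_add, map_add, Multiset.toFinsupp_singleton]

theorem mem_span_binomials_of_map_eq_zero (φ : MvPolynomial σ R →ₗ[R] MvPolynomial τ R)
    (d : (σ →₀ ℕ) → τ →₀ ℕ) (hφ : ∀ a, φ (monomial a 1) = monomial (d a) 1)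
    {p : MvPolynomial σ R} (hp : φ p = 0) :
    p ∈ Submodule.span R {f | ∃ a b, d a = d b ∧ f = monomial a 1 - monomial b 1} := by
  -- `rep ∘ φ` moves each monomial to a fixed representative of its `d`-class
  let rep := (basisMonomials τ R).constr R fun b => monomial (Function.invFun d b) (1 : R)
  suffices ∀ q, q - rep (φ q) ∈
      Submodule.span R {f | ∃ a b, d a = d b ∧ f = monomial a 1 - monomial b 1} by
    simpa [hp] using this p
  intro q
  induction q using induction_on' with
  | monomial a c =>
    have hrep : rep (monomial (d a) 1) = monomial (Function.invFun d (d a)) 1 :=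
      (basisMonomials τ R).constr_basis R _ (d a)
    rw [← mul_one c, ← smul_eq_mul, ← smul_monomial, map_smul, hφ, map_smul, hrep,
      ← smul_sub]
    exact Submodule.smul_mem _ _
      (Submodule.subset_span ⟨_, _, (Function.invFun_eq ⟨a, rfl⟩).symm, rfl⟩)
  | add p q hp hq =>
    rw [map_add, map_add, add_sub_add_comm]
    exact add_mem hp hq

theorem exists_binomial_mem_of_monomial_sub_mem_span [Nontrivial R]
    {G : Set (MvPolynomial σ R)}
    (hG : ∀ g ∈ G, ∃ a b : σ →₀ ℕ, a ≠ b ∧ g = monomial a 1 - monomial b 1)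
    {u v : σ →₀ ℕ} (huv : u ≠ v) (h : monomial u 1 - monomial v 1 ∈ Ideal.span G) :
    ∃ a b, a ≠ b ∧ monomial a 1 - monomial b 1 ∈ G ∧ (a ≤ u ∨ b ≤ u) := by
  classical
  by_contra! hisol
  -- no element of `G` can move `t^u`, so the coefficient of `t^u` vanishes on the ideal
  suffices ∀ p ∈ Ideal.span G, ∀ q : MvPolynomial σ R, coeff u (q * p) = 0 by
    simpa [coeff_monomial, huv.symm] using this _ h 1
  intro p hp
  induction hp using Submodule.span_induction with
  | mem g hg =>
    obtain ⟨a, b, hab, rfl⟩ := hG g hg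
    intro q
    simp [mul_sub, coeff_mul_monomial', (hisol a b hab hg).1, (hisol a b hab hg).2]
  | zero => simp
  | add p p' _ _ hp hp' => simp [mul_add, hp, hp']
  | smul r p _ hp => intro q; simpa [mul_assoc] using hp (q * r)

end MvPolynomial

namespace ToricHG

open MvPolynomial

section Toric

variable {K : Type} [Field K] {V : Type} {E : Finset (Finset V)}

noncomputable def degVec (M : Multiset (Edge V E)) : V →₀ ℕ :=
  (M.map fun e => ∑ v ∈ e.1, Finsupp.single v 1).sum

theorem phiH_prod_map_X (M : Multiset (Edge V E)) :
    phiH K V E (M.map X).prod = monomial (degVec M) 1 := by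
  induction M using Multiset.induction_on with
  | empty => simp [degVec]
  | cons e M ih =>
    have hX : phiH K V E (X e) = monomial (∑ v ∈ e.1, Finsupp.single v 1) 1 := by
      rw [monomial_sum_one]
      exact aeval_X _ _
    rw [Multiset.map_cons, Multiset.prod_cons, map_mul, ih, hX, monomial_mul, one_mul]
    simp [degVec]

variable [DecidableEq V]

theorem degIn_cons (v : V) (e : Edge V E) (M : Multiset (Edge V E)) :
    degIn V E v (e ::ₘ M) = (if v ∈ e.1 then 1 else 0) + degIn V E v M := by
  unfold degIn
  split_ifs <;> simp [*, add_comm]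

theorem degIn_add (v : V) (M N : Multiset (Edge V E)) :
    degIn V E v (M + N) = degIn V E v M + degIn V E v N := by
  simp [degIn, Multiset.filter_add]

theorem degIn_sub (v : V) {M N : Multiset (Edge V E)} (h : N ≤ M) :
    degIn V E v (M - N) = degIn V E v M - degIn V E v N := by
  have := degIn_add v (M - N) N
  rw [tsub_add_cancel_of_le h] at this
  omega

theorem Balanced.symm {B R : Multiset (Edge V E)} (h : Balanced V E B R) : Balanced V E R B :=
  fun v => (h v).symm

theorem Balanced.sub {B R B' R' : Multiset (Edge V E)} (h : Balanced V E B R)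
    (h' : Balanced V E B' R') (hB : B' ≤ B) (hR : R' ≤ R) :
    Balanced V E (B - B') (R - R') := fun v => by
  rw [degIn_sub v hB, degIn_sub v hR, h v, h' v]

theorem degVec_apply (M : Multiset (Edge V E)) (v : V) : degVec M v = degIn V E v M := by
  induction M using Multiset.induction_on with
  | empty => rfl
  | cons e M ih =>
    simp [degVec, degIn_cons, ← ih, Finsupp.single_apply]

theorem balanced_iff_degVec_eq {B R : Multiset (Edge V E)} :
    Balanced V E B R ↔ degVec B = degVec R := by
  simp [Balanced, Finsupp.ext_iff, degVec_apply]

theorem binom_eq_monomial_sub (B R : Multiset (Edge V E)) :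
    binom K V E B R =
      monomial (Multiset.toFinsupp B) 1 - monomial (Multiset.toFinsupp R) 1 := by
  rw [binom, prod_map_X_eq_monomial, prod_map_X_eq_monomial]

theorem binom_toMultiset (a b : Edge V E →₀ ℕ) :
    binom K V E (Finsupp.toMultiset a) (Finsupp.toMultiset b) = monomial a 1 - monomial b 1 := by
  simp [binom_eq_monomial_sub]

theorem binom_mem_toricIdeal_iff {B R : Multiset (Edge V E)} :
    binom K V E B R ∈ toricIdeal K V E ↔ Balanced V E B R := by
  show phiH K V E (binom K V E B R) = 0 ↔ _
  rw [binom, map_sub, phiH_prod_map_X, phiH_prod_map_X, sub_eq_zero,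
    (monomial_left_injective (one_ne_zero' K)).eq_iff, balanced_iff_degVec_eq]

theorem binom_eq_mul_binom_add_mul_binom {B R B' R' : Multiset (Edge V E)}
    (hB : B' ≤ B) (hR : R' ≤ R) :
    binom K V E B R = (B'.map X).prod * binom K V E (B - B') (R - R')
      + ((R - R').map X).prod * binom K V E B' R' := by
  conv_lhs => rw [binom, ← tsub_add_cancel_of_le hB, ← tsub_add_cancel_of_le hR]
  simp only [binom, Multiset.map_add, Multiset.prod_add]
  ring

theorem binom_mem_span_graverSet {B R : Multiset (Edge V E)} (h : Balanced V E B R) :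
    binom K V E B R ∈ Ideal.span (GraverSet K V E) := by
  by_cases hBR : B = R
  · simp [binom, hBR]
  by_cases hprim : Primitive V E B R
  · exact Ideal.subset_span ⟨B, R, hprim, hBR, rfl⟩
  obtain ⟨B', R', hne, h', hB, hR⟩ := not_not.1 (not_and.1 hprim h)
  have hpos : 0 < Multiset.card B' + Multiset.card R' := by
    by_contra! h0
    exact hne ⟨Multiset.card_eq_zero.1 (by omega), Multiset.card_eq_zero.1 (by omega)⟩
  have hlt : Multiset.card B' + Multiset.card R' < Multiset.card B + Multiset.card R :=
    add_lt_add (Multiset.card_lt_card hB) (Multiset.card_lt_card hR)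
  have hlt' : Multiset.card (B - B') + Multiset.card (R - R')
      < Multiset.card B + Multiset.card R := by
    rw [Multiset.card_sub hB.le, Multiset.card_sub hR.le]
    have := Multiset.card_le_card hB.le
    have := Multiset.card_le_card hR.le
    omega
  rw [binom_eq_mul_binom_add_mul_binom hB.le hR.le]
  exact add_mem (Ideal.mul_mem_left _ _ (binom_mem_span_graverSet (h.sub h' hB.le hR.le)))
    (Ideal.mul_mem_left _ _ (binom_mem_span_graverSet h'))
termination_by Multiset.card B + Multiset.card R

theorem span_graverSet : Ideal.span (GraverSet K V E) = toricIdeal K V E := by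
  refine le_antisymm (Ideal.span_le.2 ?_) fun p hp => ?_
  · rintro _ ⟨B, R, hprim, -, rfl⟩
    exact binom_mem_toricIdeal_iff.2 hprim.1
  have hmonomial (a : Edge V E →₀ ℕ) :
      (phiH K V E).toLinearMap (monomial a 1) = monomial (degVec (Finsupp.toMultiset a)) 1 := by
    simpa [prod_map_X_eq_monomial] using phiH_prod_map_X (K := K) (Finsupp.toMultiset a)
  have hspan : Submodule.span K {f | ∃ a b, degVec (Finsupp.toMultiset a) =
      degVec (Finsupp.toMultiset b) ∧ f = monomial a 1 - monomial b 1} ≤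
      (Ideal.span (GraverSet K V E)).restrictScalars K := by
    rw [Submodule.span_le]
    rintro _ ⟨a, b, hab, rfl⟩
    rw [← binom_toMultiset]
    exact binom_mem_span_graverSet (balanced_iff_degVec_eq.2 hab)
  exact hspan (mem_span_binomials_of_map_eq_zero _ _ hmonomial hp)

end Toric

section Primitive

variable {V : Type} [DecidableEq V] {E : Finset (Finset V)} {B R : Multiset (Edge V E)}

theorem eq_zero_of_balanced_zero (hE : ∀ e ∈ E, e.Nonempty) {M : Multiset (Edge V E)}
    (h : Balanced V E 0 M) : M = 0 := by
  refine Multiset.eq_zero_of_forall_notMem fun e he => ?_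
  obtain ⟨v, hv⟩ := hE e.1 e.2
  have hpos : 0 < degIn V E v M :=
    Multiset.card_pos_iff_exists_mem.2 ⟨e, by simpa [hv] using he⟩
  exact hpos.ne (h v)

theorem Primitive.eq_zero_or_eq_of_le (hE : ∀ e ∈ E, e.Nonempty) (h : Primitive V E B R)
    {B' R' : Multiset (Edge V E)} (h' : Balanced V E B' R') (hB : B' ≤ B) (hR : R' ≤ R) :
    (B' = 0 ∧ R' = 0) ∨ (B' = B ∧ R' = R) := by
  by_cases hBeq : B' = B
  · subst hBeq
    have := eq_zero_of_balanced_zero hE (by simpa using h.1.sub h' le_rfl hR)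
    exact Or.inr ⟨rfl, le_antisymm hR (tsub_eq_zero_iff_le.1 this)⟩
  by_cases hReq : R' = R
  · subst hReq
    have := eq_zero_of_balanced_zero hE (by simpa using (h.1.sub h' hB le_rfl).symm)
    exact Or.inr ⟨le_antisymm hB (tsub_eq_zero_iff_le.1 this), rfl⟩
  by_contra hne
  exact h.2 ⟨B', R', fun h0 => hne (Or.inl h0), h', lt_of_le_of_ne hB hBeq,
    lt_of_le_of_ne hR hReq⟩

theorem Primitive.inter_eq_zero (hE : ∀ e ∈ E, e.Nonempty) (h : Primitive V E B R)
    (hBR : B ≠ R) : B ∩ R = 0 := by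
  rcases h.eq_zero_or_eq_of_le hE (fun _ => rfl) (Multiset.inter_le_left (s := B) (t := R))
      Multiset.inter_le_right with ⟨h0, -⟩ | ⟨hB, hR⟩
  · exact h0
  · exact absurd (hB.symm.trans hR) hBR

end Primitive

section DegreeTwo

variable {K : Type} [Field K] {V : Type} [DecidableEq V] {E : Finset (Finset V)}
  {B R : Multiset (Edge V E)}

def EveryEdgeHasDegreeTwoVertex (E : Finset (Finset V)) : Prop :=
  ∀ e ∈ E, ∃ x ∈ e, (E.filter (x ∈ ·)).card = 2

theorem EveryEdgeHasDegreeTwoVertex.nonempty (hE : EveryEdgeHasDegreeTwoVertex E) :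
    ∀ e ∈ E, e.Nonempty := fun e he =>
  let ⟨x, hx, _⟩ := hE e he
  ⟨x, hx⟩

theorem exists_degIn_eq_count_add_count {x : V} (e : Edge V E) (hx : x ∈ e.1)
    (h2 : (E.filter (x ∈ ·)).card = 2) :
    ∃ f : Edge V E, ∀ M : Multiset (Edge V E), degIn V E x M = M.count e + M.count f := by
  have hmem : e.1 ∈ E.filter (x ∈ ·) := Finset.mem_filter.2 ⟨e.2, hx⟩
  obtain ⟨f, hf⟩ := Finset.card_eq_one.1
    (by rw [Finset.card_erase_of_mem hmem, h2] : ((E.filter (x ∈ ·)).erase e.1).card = 1)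
  have hf' := Finset.mem_erase.1 (hf ▸ Finset.mem_singleton_self f)
  obtain ⟨hfe, hfE, hxf⟩ : f ≠ e.1 ∧ f ∈ E ∧ x ∈ f := by simpa using hf'
  have hthrough (g : Edge V E) : x ∈ g.1 ↔ g = e ∨ g = ⟨f, hfE⟩ := by
    refine ⟨fun hxg => or_iff_not_imp_left.2 fun hge => Subtype.ext ?_, ?_⟩
    · have : g.1 ∈ (E.filter (x ∈ ·)).erase e.1 :=
        Finset.mem_erase.2 ⟨fun h => hge (Subtype.ext h), Finset.mem_filter.2 ⟨g.2, hxg⟩⟩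
      simpa [hf] using this
    · rintro (rfl | rfl) <;> assumption
  refine ⟨⟨f, hfE⟩, fun M => ?_⟩
  induction M using Multiset.induction_on with
  | empty => rfl
  | cons g M ih =>
    have hne : (⟨f, hfE⟩ : Edge V E) ≠ e := fun h => hfe (congrArg Subtype.val h)
    rw [degIn_cons, ih, Multiset.count_cons, Multiset.count_cons]
    by_cases hxg : x ∈ g.1
    · rcases (hthrough g).1 hxg with rfl | rfl <;> simp [hxg, hne, hne.symm] <;> omega
    · obtain ⟨hge, hgf⟩ := not_or.1 ((hthrough g).not.1 hxg)
      simp [hxg, Ne.symm hge, Ne.symm hgf]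

theorem Primitive.eq_or_eq_of_balanced (hdeg2 : EveryEdgeHasDegreeTwoVertex E)
    (h : Primitive V E B R) (hBR : B ≠ R) {W : Multiset (Edge V E)} (hW : Balanced V E W B) :
    W = B ∨ W = R := by
  have hdisj := h.inter_eq_zero hdeg2.nonempty hBR
  -- at the degree-two vertex of `a`, the multiplicities of `a` and its partner in `B` and `R`
  -- sum to the same number, while `B` and `R` are disjoint
  have hWR : W - W ∩ B ≤ R := by
    refine Multiset.le_iff_count.2 fun a => ?_
    obtain ⟨x, hx, hx2⟩ := hdeg2 a.1 a.2
    obtain ⟨a', ha'⟩ := exists_degIn_eq_count_add_count a hx hx2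
    have hBR' := h.1 x
    have hWB := hW x
    rw [ha', ha'] at hBR' hWB
    have hda := congrArg (Multiset.count a) hdisj
    have hda' := congrArg (Multiset.count a') hdisj
    simp only [Multiset.count_inter, Multiset.count_zero] at hda hda'
    rw [Multiset.count_sub, Multiset.count_inter]
    omega
  rcases h.eq_zero_or_eq_of_le hdeg2.nonempty
      (hW.symm.sub (fun _ => rfl) Multiset.inter_le_right Multiset.inter_le_left) tsub_le_self hWR
      with ⟨hB0, hW0⟩ | ⟨hBT, hWT⟩
  · rw [tsub_eq_zero_iff_le] at hB0 hW0
    exact Or.inl (le_antisymm (hW0.trans Multiset.inter_le_right)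
      (hB0.trans Multiset.inter_le_left))
  · have hT : W ∩ B = 0 := by
      have := tsub_add_cancel_of_le (Multiset.inter_le_right (s := W) (t := B))
      rwa [hBT, add_eq_left] at this
    rw [← hWT, hT, tsub_zero]
    exact Or.inr rfl

theorem Primitive.eq_of_balanced_of_le (hdeg2 : EveryEdgeHasDegreeTwoVertex E)
    (h : Primitive V E B R) (hBR : B ≠ R) {A C : Multiset (Edge V E)} (hAC : Balanced V E A C)
    (hne : A ≠ C) (hA : A ≤ B) : A = B ∧ C = R := by
  obtain ⟨D, rfl⟩ := exists_add_of_le hA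
  have hmove : Balanced V E (C + D) (A + D) := fun v => by
    rw [degIn_add, degIn_add, hAC v]
  rcases h.eq_or_eq_of_balanced hdeg2 hBR hmove with hCA | hCR
  · exact absurd (add_right_cancel hCA).symm hne
  rcases h.eq_zero_or_eq_of_le hdeg2.nonempty hAC le_self_add (hCR ▸ le_self_add)
    with ⟨hA0, hC0⟩ | hAC
  · exact absurd (hA0.trans hC0.symm) hne
  · exact hAC

theorem Primitive.indispensable (hdeg2 : EveryEdgeHasDegreeTwoVertex E)
    (h : Primitive V E B R) (hBR : B ≠ R) : Indispensable K V E (binom K V E B R) := by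
  intro G hG hspan
  have hmem : monomial (Multiset.toFinsupp B) 1 - monomial (Multiset.toFinsupp R) 1 ∈
      Ideal.span G := by
    rw [← binom_eq_monomial_sub, hspan, binom_mem_toricIdeal_iff]
    exact h.1
  obtain ⟨a, b, hab, hg, hle⟩ :=
    exists_binomial_mem_of_monomial_sub_mem_span hG (Multiset.toFinsupp.injective.ne hBR) hmem
  rw [← binom_toMultiset] at hg
  have hbal := binom_mem_toricIdeal_iff.1 (hspan ▸ Ideal.subset_span hg)
  have hne := Multiset.toFinsupp.symm.injective.ne hab
  rcases hle with hle | hle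
  · obtain ⟨rfl, rfl⟩ := h.eq_of_balanced_of_le hdeg2 hBR hbal hne
      (by simpa using Finsupp.toMultiset_strictMono.monotone hle)
    exact Or.inl hg
  · obtain ⟨rfl, rfl⟩ := h.eq_of_balanced_of_le hdeg2 hBR hbal.symm hne.symm
      (by simpa using Finsupp.toMultiset_strictMono.monotone hle)
    exact Or.inr (by rwa [binom, neg_sub])

end DegreeTwo

theorem graver_unique_minimal_of_partite_locally_two_regular_general
    (K : Type) [Field K] (V : Type) [DecidableEq V]
    (k : ℕ) (E : Finset (Finset V))
    (P : V → Fin k)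
    (hpart : ∀ e ∈ E, ∀ i : Fin k, (e.filter (fun v => P v = i)).card = 1)
    (i : Fin k)
    (hloc : ∀ v : V, P v = i → (E.filter (fun e => v ∈ e)).card = 2) :
    Ideal.span (GraverSet K V E) = toricIdeal K V E ∧
      ∀ f ∈ GraverSet K V E, Indispensable K V E f := by
  have hdeg2 : EveryEdgeHasDegreeTwoVertex E := by
    intro e he
    obtain ⟨x, hx⟩ := Finset.card_eq_one.1 (hpart e he i)
    obtain ⟨hxe, hPx⟩ := Finset.mem_filter.1 (hx ▸ Finset.mem_singleton_self x)
    exact ⟨x, hxe, hloc x hPx⟩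
  refine ⟨span_graverSet, ?_⟩
  rintro _ ⟨B, R, h, hBR, rfl⟩
  exact h.indispensable hdeg2 hBR

/-- Let `H` be a `k`-uniform `k`-partite hypergraph (partition recorded by
`P : V → Fin k`) such that for some index `i` every vertex of the part `P⁻¹(i)` lies in exactly
two edges of `H`. Then the Graver basis generates `I_H` and each of its elements is
indispensable; hence it is the unique minimal binomial generating set of `I_H`. -/
theorem graver_unique_minimal_of_partite_locally_two_regular
    (K : Type) [Field K] (V : Type) [Fintype V] [DecidableEq V]
    (k : ℕ) (E : Finset (Finset V)) (hE : ∀ e ∈ E, e.Nonempty)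
    (P : V → Fin k)
    (hpart : ∀ e ∈ E, ∀ i : Fin k, (e.filter (fun v => P v = i)).card = 1)
    (i : Fin k)
    (hloc : ∀ v : V, P v = i → (E.filter (fun e => v ∈ e)).card = 2) :
    Ideal.span (GraverSet K V E) = toricIdeal K V E ∧
      ∀ f ∈ GraverSet K V E, Indispensable K V E f :=
  graver_unique_minimal_of_partite_locally_two_regular_general K V k E P hpart i hloc

end ToricHG
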